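/- Let f : {−1,1}^n → {−1,1} be computable by a decision tree of size s and let τ > 0. Then the number of indices i ∈ {1,…,n} with Inf_i(f) ≥ τ is at most (log₂ s)/τ. -/

import Mathlib

/-!
Decision trees over {-1,1}^n, where a point of the cube is encoded as `x : Fin n → Bool`
(`true` encodes 1, `false` encodes -1).

By Markov's inequality it suffices to bound the total influence `∑ i, Inf_i(f)` by `log₂ s`,
which goes by induction on `s`. If the root queries `x_i`, then `Inf_i(f) ≤ 1`, and for `j ≠ i`
the influence of `x_j` is the average of its influences in the two restrictions `x_i = ±1`. These
are computed by the two subtrees with `x_i` fixed, of sizes `a`, `b` with `a + b ≤ s`, and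
`1 + (log₂ a + log₂ b) / 2 ≤ log₂ (a + b)` is AM-GM.
-/

inductive DTree (Y : Type) (n : ℕ) : Type
  | leaf : Y → DTree Y n
  | node : Fin n → DTree Y n → DTree Y n → DTree Y n

namespace DTree

variable {Y : Type} {n : ℕ}

/-- The function computed by a decision tree: at a node labeled `i`, follow the right
subtree if `x_i = 1` (`x i = true`) and the left subtree if `x_i = -1` (`x i = false`). -/
def eval : DTree Y n → (Fin n → Bool) → Y
  | .leaf y, _ => y
  | .node i l r, x => if x i then r.eval x else l.eval x

def size : DTree Y n → ℕ
  | .leaf _ => 1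
  | .node _ l r => l.size + r.size

end DTree

/-- The influence of variable `i` on `f`: `Pr[f(x) ≠ f(x^{~i})]`, where `x` is uniform and
`x^{~i}` is `x` with its `i`-th coordinate rerandomized. -/
noncomputable def infl {n : ℕ} (f : (Fin n → Bool) → Bool) (i : Fin n) : ℝ :=
  (∑ x : Fin n → Bool,
      ((if f x = f (Function.update x i true) then (0 : ℝ) else 1) +
        (if f x = f (Function.update x i false) then (0 : ℝ) else 1)) / 2) / 2 ^ n

namespace DTree

variable {Y : Type} {n : ℕ}

def restrict (i : Fin n) (b : Bool) : DTree Y n → DTree Y n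
  | .leaf y => .leaf y
  | .node j l r =>
    if j = i then (if b then r.restrict i b else l.restrict i b)
    else .node j (l.restrict i b) (r.restrict i b)

lemma size_pos (T : DTree Y n) : 0 < T.size := by
  induction T with
  | leaf => exact Nat.one_pos
  | node _ l _ ihl _ => exact Nat.add_pos_left ihl _

lemma size_restrict_le (i : Fin n) (b : Bool) (T : DTree Y n) :
    (T.restrict i b).size ≤ T.size := by
  induction T with
  | leaf => exact le_rfl
  | node j l r ihl ihr =>
    simp only [restrict]
    split_ifs <;> simp only [size] <;> omega

lemma eval_restrict (i : Fin n) (b : Bool) (T : DTree Y n) (x : Fin n → Bool) :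
    (T.restrict i b).eval x = T.eval (Function.update x i b) := by
  induction T with
  | leaf => rfl
  | node j l r ihl ihr =>
    by_cases hji : j = i
    · subst hji
      cases b <;> simp [restrict, eval, ihl, ihr]
    · simp [restrict, eval, hji, ihl, ihr]

end DTree

section Cube

variable {ι : Type*} [DecidableEq ι]

def flipAt (i : ι) : Equiv.Perm (ι → Bool) :=
  Function.Involutive.toPerm (fun x => Function.update x i (!x i)) fun x => by simp

lemma flipAt_apply (i : ι) (x : ι → Bool) : flipAt i x = Function.update x i (!x i) := rfl

lemma update_true_add_update_false {M : Type*} [AddCommMonoid M] (g : (ι → Bool) → M)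
    (i : ι) (x : ι → Bool) :
    g (Function.update x i true) + g (Function.update x i false) = g x + g (flipAt i x) := by
  have hx : Function.update x i (x i) = x := Function.update_eq_self i x
  rw [flipAt_apply]
  cases h : x i <;> rw [h] at hx <;> simp [hx, add_comm]

lemma sum_update_true_add_sum_update_false [Fintype ι] {M : Type*} [AddCommMonoid M]
    (g : (ι → Bool) → M) (i : ι) :
    ∑ x, g (Function.update x i true) + ∑ x, g (Function.update x i false) = 2 • ∑ x, g x := by
  rw [← Finset.sum_add_distrib, Finset.sum_congr rfl fun x _ => update_true_add_update_false g i x,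
    Finset.sum_add_distrib, Equiv.sum_comp, two_nsmul]

end Cube

lemma card_le_apply_le_sum_div {ι : Type*} [Fintype ι] {g : ι → ℝ} (hg : ∀ i, 0 ≤ g i)
    {τ : ℝ} (hτ : 0 < τ) :
    (Nat.card {i // τ ≤ g i} : ℝ) ≤ (∑ i, g i) / τ := by
  classical
  rw [Nat.card_eq_fintype_card, Fintype.card_subtype, le_div_iff₀ hτ, ← nsmul_eq_mul]
  calc _ ≤ ∑ i ∈ Finset.univ.filter (fun i => τ ≤ g i), g i :=
        Finset.card_nsmul_le_sum _ _ _ fun i hi => (Finset.mem_filter.mp hi).2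
    _ ≤ ∑ i, g i := Finset.sum_le_sum_of_subset_of_nonneg (Finset.subset_univ _) fun i _ _ => hg i

lemma one_add_avg_logb_two_le {a b : ℝ} (ha : 0 < a) (hb : 0 < b) :
    1 + (Real.logb 2 a + Real.logb 2 b) / 2 ≤ Real.logb 2 (a + b) := by
  have amgm : a * b ≤ ((a + b) / 2) ^ 2 := by nlinarith [sq_nonneg (a - b)]
  have h := Real.logb_le_logb_of_le (b := 2) one_lt_two (mul_pos ha hb) amgm
  rw [Real.logb_mul ha.ne' hb.ne', Real.logb_pow, Real.logb_div (by positivity) two_ne_zero,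
    Real.logb_self_eq_one one_lt_two] at h
  push_cast at h
  linarith

section Influence

variable {n : ℕ}

lemma infl_nonneg (f : (Fin n → Bool) → Bool) (i : Fin n) : 0 ≤ infl f i := by
  unfold infl; positivity

lemma infl_le_one (f : (Fin n → Bool) → Bool) (i : Fin n) : infl f i ≤ 1 := by
  unfold infl
  rw [div_le_one (by positivity)]
  calc _ ≤ ∑ _x : Fin n → Bool, (1 : ℝ) := Finset.sum_le_sum fun x _ => by split_ifs <;> norm_num
    _ = 2 ^ n := by simp

lemma infl_const (b : Bool) (i : Fin n) : infl (fun _ => b) i = 0 := by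
  simp [infl]

lemma infl_update_true_add_infl_update_false (f : (Fin n → Bool) → Bool) {i j : Fin n}
    (hij : i ≠ j) :
    infl (fun x => f (Function.update x i true)) j + infl (fun x => f (Function.update x i false)) j
      = 2 * infl f j := by
  have key := sum_update_true_add_sum_update_false (fun x => ((if f x = f (Function.update x j true)
    then (0 : ℝ) else 1) + (if f x = f (Function.update x j false) then (0 : ℝ) else 1)) / 2) i
  simp only [Function.update_comm (β := fun _ => Bool) hij true true,
    Function.update_comm (β := fun _ => Bool) hij true false,
    Function.update_comm (β := fun _ => Bool) hij false true,
    Function.update_comm (β := fun _ => Bool) hij false false, nsmul_eq_mul, Nat.cast_ofNat] at key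
  simp only [infl, ← add_div, key, mul_div_assoc]

lemma infl_eval_node_le (i j : Fin n) (l r : DTree Bool n) :
    infl (DTree.node i l r).eval j ≤ (if j = i then 1 else 0) +
      (infl (l.restrict i false).eval j + infl (r.restrict i true).eval j) / 2 := by
  by_cases hj : j = i
  · subst hj
    simp only [if_true]
    linarith [infl_le_one (DTree.node j l r).eval j, infl_nonneg (l.restrict j false).eval j,
      infl_nonneg (r.restrict j true).eval j]
  · have h := infl_update_true_add_infl_update_false (DTree.node i l r).eval (Ne.symm hj)
    have hl : (fun x => (DTree.node i l r).eval (Function.update x i false))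
        = (l.restrict i false).eval := by
      funext x; simp [DTree.eval, DTree.eval_restrict]
    have hr : (fun x => (DTree.node i l r).eval (Function.update x i true))
        = (r.restrict i true).eval := by
      funext x; simp [DTree.eval, DTree.eval_restrict]
    rw [hl, hr] at h
    simp only [hj, if_false]
    linarith

theorem sum_infl_eval_le_logb_size (T : DTree Bool n) :
    ∑ j, infl T.eval j ≤ Real.logb 2 T.size := by
  induction hs : T.size using Nat.strong_induction_on generalizing T with
  | _ s ih =>
  subst hs
  cases T with
  | leaf b =>
    have hconst : (DTree.leaf b : DTree Bool n).eval = fun _ => b := rfl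
    simp [hconst, infl_const, DTree.size]
  | node i l r =>
    set L := l.restrict i false
    set R := r.restrict i true
    have hLsize : L.size ≤ l.size := DTree.size_restrict_le i false l
    have hRsize : R.size ≤ r.size := DTree.size_restrict_le i true r
    have hsize : (DTree.node i l r).size = l.size + r.size := rfl
    have hl_pos := l.size_pos
    have hr_pos := r.size_pos
    have hL_pos := L.size_pos
    have hR_pos := R.size_pos
    calc ∑ j, infl (DTree.node i l r).eval j
        ≤ ∑ j, ((if j = i then 1 else 0) + (infl L.eval j + infl R.eval j) / 2) :=
          Finset.sum_le_sum fun j _ => infl_eval_node_le i j l r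
      _ = 1 + (∑ j, infl L.eval j + ∑ j, infl R.eval j) / 2 := by
          rw [Finset.sum_add_distrib, Finset.sum_ite_eq', ← Finset.sum_add_distrib,
            Finset.sum_div]
          simp
      _ ≤ 1 + (Real.logb 2 L.size + Real.logb 2 R.size) / 2 := by
          gcongr
          · exact ih _ (by omega) L rfl
          · exact ih _ (by omega) R rfl
      _ ≤ 1 + (Real.logb 2 l.size + Real.logb 2 r.size) / 2 := by
          gcongr <;> exact one_lt_two
      _ ≤ Real.logb 2 (l.size + r.size) := one_add_avg_logb_two_le (by positivity) (by positivity)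
      _ = Real.logb 2 (DTree.node i l r).size := by rw [hsize, Nat.cast_add]

end Influence

/-- **Few influential variables.** If `f` is computable by a decision tree of size `s` and
`τ > 0`, then the number of `i` with `Inf_i(f) ≥ τ` is at most `(log₂ s)/τ`. -/
theorem stmt8 {n : ℕ} (s : ℕ) (τ : ℝ) (hτ : 0 < τ)
    (f : (Fin n → Bool) → Bool) (T : DTree Bool n)
    (hsize : T.size = s) (hTf : ∀ x, T.eval x = f x) :
    (Nat.card {i : Fin n // τ ≤ infl f i} : ℝ) ≤ Real.logb 2 s / τ := by
  obtain rfl : T.eval = f := funext hTf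
  subst hsize
  calc _ ≤ (∑ i, infl T.eval i) / τ := card_le_apply_le_sum_div (infl_nonneg T.eval) hτ
    _ ≤ Real.logb 2 T.size / τ := by gcongr; exact sum_infl_eval_le_logb_size T
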